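/- In the root system D_p with Δ₋₂ = {-(ε_i+ε_j) : i<j}, ε = ε_{p-1}+ε_p, and γ_j = -(ε_{p-2j+1}+ε_{p-2j+2}) for 1 ≤ j ≤ ⌊p/2⌋: for every j and every compact simple root α (i.e., α = ψ_i = ε_i - ε_{i+1}, 1 ≤ i ≤ p-1), if the coefficient of α in Σ_{1≤i≤j} γ_i (expanded in the simple root basis) is nonzero, then ⟨Σ_{1≤i≤j} γ_i, α⟩ = 0. -/

import Mathlib

open scoped RealInnerProductSpace

/-- Type `D_p` (`p ≥ 4`): with simple roots `ψ_k = ε_k - ε_{k+1}` (`k < p-1`) and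
`ψ_{p-1} = ε_{p-1} + ε_p`, and `γⱼ = -(ε_{p-2j+1} + ε_{p-2j+2})`, for every `j` and every
compact simple root `ψᵢ` (`i < p-1`, 0-indexed), if the coefficient of `ψᵢ` in the expansion
of `Σ_{k ≤ j} γ_k` in the simple root basis is nonzero, then `⟪Σ_{k ≤ j} γ_k, ψᵢ⟫ = 0`.
Here `a v` denotes the coordinates of `v` in the basis `ψ`. -/
theorem stmt16 (p : ℕ) (hp : 4 ≤ p) :
    let e : Fin p → EuclideanSpace ℝ (Fin p) := fun i => EuclideanSpace.single i 1
    let ψ : Fin p → EuclideanSpace ℝ (Fin p) := fun k =>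
      if h : k.val = p - 1 then e ⟨p - 2, by omega⟩ + e ⟨p - 1, by omega⟩
      else e k - e ⟨k.val + 1, by have := k.isLt; omega⟩
    let γ : Fin (p / 2) → EuclideanSpace ℝ (Fin p) := fun j =>
      -(e ⟨p - 2 * j.val - 2, by have := j.isLt; omega⟩ +
        e ⟨p - 2 * j.val - 1, by have := j.isLt; omega⟩)
    ∀ a : EuclideanSpace ℝ (Fin p) → Fin p → ℝ,
      (∀ v : EuclideanSpace ℝ (Fin p), v = ∑ k : Fin p, a v k • ψ k) →
      ∀ j : Fin (p / 2), ∀ i : Fin p, i.val < p - 1 →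
        a (∑ k ∈ Finset.Iic j, γ k) i ≠ 0 →
        ⟪∑ k ∈ Finset.Iic j, γ k, ψ i⟫ = (0 : ℝ) := by
  intro e ψ γ a ha j i hi hne
  have hj := j.isLt
  have hip := i.isLt
  set m := p - 2 * j.val - 2 with hm
  have sum_apply : ∀ {n : ℕ} (s : Finset (Fin n)) (f : Fin n → EuclideanSpace ℝ (Fin p))
      (t : Fin p), (∑ k ∈ s, f k) t = ∑ k ∈ s, f k t := by
    intro n s f t
    induction s using Finset.cons_induction with
    | empty => rfl
    | cons k s hk ih => rw [Finset.sum_cons, Finset.sum_cons, ← ih]; rfl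
  have inner_eq : ∀ x y : EuclideanSpace ℝ (Fin p), ⟪x, y⟫ = ∑ t, x t * y t := by
    intro x y; simp [PiLp.inner_apply, RCLike.inner_apply, mul_comm]
  set S := ∑ k ∈ Finset.Iic j, γ k with hSdef
  have hγ : ∀ (k : Fin (p/2)) (t : Fin p), γ k t =
      -((if t.val = p - 2*k.val - 2 then (1:ℝ) else 0) +
        (if t.val = p - 2*k.val - 1 then 1 else 0)) := by
    intro k t
    simp [γ, e, EuclideanSpace.single_apply, Fin.ext_iff]
  have hS : ∀ t : Fin p, S t = if m ≤ t.val then -1 else 0 := by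
    intro t
    have ht := t.isLt
    rw [hSdef, sum_apply]
    by_cases hmt : m ≤ t.val
    · rw [if_pos hmt]
      have hk0 : (p - 1 - t.val)/2 < p/2 := by omega
      rw [Finset.sum_eq_single (⟨(p-1-t.val)/2, hk0⟩ : Fin (p/2))]
      · rw [hγ]
        have hd : p - 2*((p-1-t.val)/2) - 2 = t.val ∨ p - 2*((p-1-t.val)/2) - 1 = t.val := by
          omega
        rcases hd with h | h
        · rw [if_pos h.symm, if_neg (by omega)]; norm_num
        · rw [if_neg (by omega), if_pos h.symm]; norm_num
      · intro k hk hkne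
        have hk'' : k ≤ j := Finset.mem_Iic.mp hk
        have hk' : k.val ≤ j.val := hk''
        have hkn : k.val ≠ (p-1-t.val)/2 := fun h => hkne (Fin.ext h)
        have hkp := k.isLt
        rw [hγ, if_neg (by omega), if_neg (by omega)]; norm_num
      · intro h
        exact absurd (Finset.mem_Iic.mpr (by rw [Fin.le_def]; simp; omega)) h
    · rw [if_neg hmt]
      apply Finset.sum_eq_zero
      intro k hk
      have hk'' : k ≤ j := Finset.mem_Iic.mp hk
      have hk' : k.val ≤ j.val := hk''
      rw [hγ, if_neg (by omega), if_neg (by omega)]; norm_num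
  have hψi : ψ i = e i - e ⟨i.val + 1, by omega⟩ := dif_neg (by omega)
  have key : ⟪S, ψ i⟫ = S i - S ⟨i.val + 1, by omega⟩ := by
    rw [inner_eq, hψi]
    have : ∀ t : Fin p, S t * (e i - e ⟨i.val + 1, by omega⟩) t =
        (if t = i then S t else 0) - (if t = (⟨i.val + 1, by omega⟩ : Fin p) then S t else 0) := by
      intro t
      simp [e, EuclideanSpace.single_apply, mul_sub, mul_ite]
    rw [Finset.sum_congr rfl (fun t _ => this t), Finset.sum_sub_distrib,
      Finset.sum_ite_eq' Finset.univ i, Finset.sum_ite_eq' Finset.univ]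
    simp
  rw [key, hS, hS]
  by_cases h1 : m ≤ i.val
  · rw [if_pos h1, if_pos (by simp; omega)]; ring
  · by_cases h2 : m ≤ i.val + 1
    · -- i.val + 1 = m : contradiction with hne
      exfalso
      have him : i.val + 1 = m := by omega
      have hile : i.val ≤ p - 3 := by omega
      set w : EuclideanSpace ℝ (Fin p) := WithLp.toLp 2 (fun t : Fin p => if t.val ≤ i.val then (1:ℝ) else 0) with hw
      have hwap : ∀ t : Fin p, w t = if t.val ≤ i.val then (1:ℝ) else 0 := fun t => rfl
      have hinner : ∀ k : Fin p, ⟪ψ k, w⟫ = if k = i then 1 else 0 := by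
        intro k
        rw [inner_eq]
        by_cases hk : k.val = p - 1
        · rw [show ψ k = e ⟨p-2, by omega⟩ + e ⟨p-1, by omega⟩ from dif_pos hk,
            if_neg (by intro h; rw [h] at hk; omega)]
          have : ∀ t : Fin p, (e ⟨p-2, by omega⟩ + e ⟨p-1, by omega⟩) t * w t =
              (if t = (⟨p-2, by omega⟩ : Fin p) then w t else 0) +
              (if t = (⟨p-1, by omega⟩ : Fin p) then w t else 0) := by
            intro t
            simp [e, EuclideanSpace.single_apply, add_mul, mul_ite]
          rw [Finset.sum_congr rfl (fun t _ => this t), Finset.sum_add_distrib,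
            Finset.sum_ite_eq' Finset.univ, Finset.sum_ite_eq' Finset.univ]
          simp only [hwap, Fin.val_mk, Finset.mem_univ, if_true]
          rw [if_neg (by omega), if_neg (by omega)]; ring
        · rw [show ψ k = e k - e ⟨k.val + 1, by have := k.isLt; omega⟩ from dif_neg hk]
          have : ∀ t : Fin p, (e k - e ⟨k.val + 1, by have := k.isLt; omega⟩) t * w t =
              (if t = k then w t else 0) -
              (if t = (⟨k.val + 1, by have := k.isLt; omega⟩ : Fin p) then w t else 0) := by
            intro t
            simp [e, EuclideanSpace.single_apply, sub_mul, mul_ite]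
          rw [Finset.sum_congr rfl (fun t _ => this t), Finset.sum_sub_distrib,
            Finset.sum_ite_eq' Finset.univ, Finset.sum_ite_eq' Finset.univ]
          simp only [Finset.mem_univ, if_true, hwap]
          by_cases hki : k = i
          · subst hki; rw [if_pos le_rfl, if_neg (by omega), if_pos rfl]; ring
          · have hkiv : k.val ≠ i.val := fun h => hki (Fin.ext h)
            rw [if_neg hki]
            by_cases hlt : k.val ≤ i.val
            · rw [if_pos hlt, if_pos (by omega)]; ring
            · rw [if_neg hlt, if_neg (by omega)]; ring
      have h0 : ⟪S, w⟫ = 0 := by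
        rw [inner_eq]
        apply Finset.sum_eq_zero
        intro t _
        rw [hS, hwap]
        by_cases hmt : m ≤ t.val
        · rw [if_pos hmt, if_neg (by omega)]; ring
        · rw [if_neg hmt]; ring
      have h1' : ⟪S, w⟫ = a S i := by
        conv_lhs => rw [ha S]
        rw [sum_inner]
        have : ∀ k : Fin p, ⟪a S k • ψ k, w⟫ = if k = i then a S k else 0 := by
          intro k
          rw [real_inner_smul_left, hinner, mul_ite, mul_one, mul_zero]
        rw [Finset.sum_congr rfl (fun k _ => this k), Finset.sum_ite_eq' Finset.univ]
        simp
      exact hne (by rw [← h1', h0])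
    · rw [if_neg h1, if_neg (by simp; omega)]; ring
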